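/- The localization functor Q : Preglid FR → Glid FR admits a fully faithful left adjoint L := j_L∘φ; in particular, Glid FR is equivalent to a coreflective full subcategory of Preglid FR. -/

import Mathlib

set_option linter.unusedSectionVars false
set_option maxHeartbeats 1000000
set_option synthInstance.maxHeartbeats 1000000
set_option maxHeartbeats 2000000

noncomputable section

open CategoryTheory CategoryTheory.Limits

universe u

namespace GliderPaper

/-- A `Γ`-filtration `FR` on a unital ring `R`: additive subgroups `F γ` with
`1 ∈ F 1`, monotone in `γ`, and multiplicative. -/
structure RingFiltration (Γ : Type u) [Group Γ] [PartialOrder Γ] (R : Type u) [Ring R] where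
  F : Γ → AddSubgroup R
  one_mem : (1 : R) ∈ F 1
  mono : ∀ {α β : Γ}, α ≤ β → F α ≤ F β
  mul_mem : ∀ {α β : Γ} {a b : R}, a ∈ F α → b ∈ F β → a * b ∈ F (α * β)

variable {Γ : Type u} [Group Γ] [PartialOrder Γ]
  [CovariantClass Γ Γ (· * ·) (· ≤ ·)] [CovariantClass Γ Γ (Function.swap (· * ·)) (· ≤ ·)]
  {R : Type u} [Ring R]

/-- Objects of the extended filtered companion category `oFF_Λ R`:
the disjoint union `Λ ⊔ {∞}`. -/
inductive OFF (FR : RingFiltration Γ R) (Λ : Set Γ) : Type u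
  | of (α : Λ)
  | infty

/-- Objects of the filtered companion category `FF_Λ R`: the set `Λ`. -/
inductive FF (FR : RingFiltration Γ R) (Λ : Set Γ) : Type u
  | of (α : Λ)

variable (FR : RingFiltration Γ R) (Λ : Set Γ)

namespace OFF

/-- `le X Y` holds iff the canonical morphism `1_{X,Y}` is defined, i.e. `X ≤ Y` in `Λ`,
or `Y = ∞`. -/
def le : OFF FR Λ → OFF FR Λ → Prop
  | of α, of β => (α : Γ) ≤ (β : Γ)
  | _, infty => True
  | infty, of _ => False

open scoped Classical in
/-- The additive subgroup of `R` of morphisms `X ⟶ Y` in `oFF_Λ R`: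
`Hom(α,β) = F_{βα⁻¹}R` for `α ≤ β` in `Λ`, `Hom(X,∞) = R`, and `0` otherwise. -/
noncomputable def homGrp : OFF FR Λ → OFF FR Λ → AddSubgroup R
  | of α, of β => if (α : Γ) ≤ (β : Γ) then FR.F ((β : Γ) * (α : Γ)⁻¹) else ⊥
  | _, infty => ⊤
  | infty, of _ => ⊥

theorem le_refl' : ∀ X : OFF FR Λ, le FR Λ X X
  | of _ => _root_.le_refl _
  | infty => trivial

theorem one_mem_homGrp : ∀ {X Y : OFF FR Λ}, le FR Λ X Y → (1 : R) ∈ homGrp FR Λ X Y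
  | of α, of β, h => by
      have h' : (α : Γ) ≤ (β : Γ) := h
      have h1 : (1 : Γ) ≤ (β : Γ) * (α : Γ)⁻¹ := by
        rw [← mul_inv_cancel (α : Γ)]
        exact mul_le_mul_left h' _
      simpa [homGrp, if_pos h'] using FR.mono h1 FR.one_mem
  | of _, infty, _ => trivial
  | infty, infty, _ => trivial
  | infty, of _, h => h.elim

theorem mul_mem_homGrp : ∀ {X Y Z : OFF FR Λ} {f g : R},
    f ∈ homGrp FR Λ X Y → g ∈ homGrp FR Λ Y Z → g * f ∈ homGrp FR Λ X Z := by
  intro X Y Z f g hf hg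
  cases X <;> cases Y <;> cases Z <;> simp only [homGrp] at hf hg ⊢ <;> try trivial
  case of.of.of a b c =>
    by_cases hab : (a : Γ) ≤ (b : Γ)
    · by_cases hbc : (b : Γ) ≤ (c : Γ)
      · rw [if_pos hab] at hf
        rw [if_pos hbc] at hg
        rw [if_pos (le_trans hab hbc)]
        have := FR.mul_mem hg hf
        rwa [show (c : Γ) * (b : Γ)⁻¹ * ((b : Γ) * (a : Γ)⁻¹) = (c : Γ) * (a : Γ)⁻¹ by
          group] at this
      · rw [if_neg hbc] at hg
        rw [AddSubgroup.mem_bot] at hg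
        subst hg
        simp only [zero_mul]
        exact AddSubgroup.zero_mem _
    · rw [if_neg hab] at hf
      rw [AddSubgroup.mem_bot] at hf
      subst hf
      simp only [mul_zero]
      exact AddSubgroup.zero_mem _
  case of.infty.of a c =>
    rw [AddSubgroup.mem_bot] at hg
    subst hg
    simp only [zero_mul]
    exact AddSubgroup.zero_mem _
  case infty.of.of b c =>
    rw [AddSubgroup.mem_bot] at hf
    subst hf
    simp only [mul_zero]
    exact AddSubgroup.zero_mem _
  case infty.infty.of c =>
    rw [AddSubgroup.mem_bot] at hg
    subst hg
    simp only [zero_mul]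
    exact AddSubgroup.zero_mem _

instance : Category (OFF FR Λ) where
  Hom X Y := homGrp FR Λ X Y
  id X := ⟨1, one_mem_homGrp FR Λ (le_refl' FR Λ X)⟩
  comp f g := ⟨g.1 * f.1, mul_mem_homGrp FR Λ f.2 g.2⟩
  id_comp f := Subtype.ext (mul_one f.1)
  comp_id f := Subtype.ext (one_mul f.1)
  assoc f g h := Subtype.ext (mul_assoc h.1 g.1 f.1).symm

instance : Preadditive (OFF FR Λ) where
  homGroup X Y := inferInstanceAs (AddCommGroup (homGrp FR Λ X Y))
  add_comp _ _ _ f f' g := Subtype.ext (mul_add g.1 f.1 f'.1)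
  comp_add _ _ _ f g g' := Subtype.ext (add_mul g.1 g'.1 f.1)

end OFF

namespace FF

/-- The inclusion of the objects of `FF_Λ R` into those of `oFF_Λ R`. -/
def toOFF : FF FR Λ → OFF FR Λ
  | of α => .of α

instance : Category (FF FR Λ) where
  Hom X Y := OFF.homGrp FR Λ (toOFF FR Λ X) (toOFF FR Λ Y)
  id X := ⟨1, OFF.one_mem_homGrp FR Λ (OFF.le_refl' FR Λ _)⟩
  comp f g := ⟨g.1 * f.1, OFF.mul_mem_homGrp FR Λ f.2 g.2⟩
  id_comp f := Subtype.ext (mul_one f.1)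
  comp_id f := Subtype.ext (one_mul f.1)
  assoc f g h := Subtype.ext (mul_assoc h.1 g.1 f.1).symm

instance : Preadditive (FF FR Λ) where
  homGroup X Y := inferInstanceAs (AddCommGroup (OFF.homGrp FR Λ (toOFF FR Λ X) (toOFF FR Λ Y)))
  add_comp _ _ _ f f' g := Subtype.ext (mul_add g.1 f.1 f'.1)
  comp_add _ _ _ f g g' := Subtype.ext (add_mul g.1 g'.1 f.1)

end FF

/-- The inclusion functor `j : FF_Λ R ⥤ oFF_Λ R`. -/
def jF : FF FR Λ ⥤ OFF FR Λ where
  obj := FF.toOFF FR Λ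
  map f := f
  map_id _ := rfl
  map_comp _ _ := rfl

instance : (jF FR Λ).Additive := ⟨rfl⟩

/-- `Mod C`: the category of additive functors from `C` to abelian groups. -/
abbrev Mod (C : Type u) [Category.{u} C] [Preadditive C] : Type (u + 1) :=
  C ⥤+ AddCommGrpCat.{u}

/-- The component at `X` of a morphism in `Mod C`. -/
def mapp {C : Type u} [Category.{u} C] [Preadditive C] {M N : Mod C} (f : M ⟶ N) (X : C) :
    M.obj.obj X ⟶ N.obj.obj X :=
  (show M.obj ⟶ N.obj from f.hom).app X

/-- The canonical morphism `1_{X,Y}` in `oFF_Λ R`, given by `1_R`. -/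
def unitHom (X Y : OFF FR Λ) (h : OFF.le FR Λ X Y) : X ⟶ Y :=
  ⟨1, OFF.one_mem_homGrp FR Λ h⟩

/-- The canonical morphism `1_{α,β}` in `FF_Λ R`, given by `1_R`. -/
def unitHomFF (α β : Λ) (h : (α : Γ) ≤ (β : Γ)) : (FF.of α : FF FR Λ) ⟶ FF.of β :=
  unitHom FR Λ (.of α) (.of β) h

/-- A module `M` over `oFF_Λ R` is a preglider if all the maps `M(1_{X,Y})` are injective. -/
def IsPreglider (M : Mod (OFF FR Λ)) : Prop :=
  ∀ (X Y : OFF FR Λ) (h : OFF.le FR Λ X Y), Function.Injective (M.obj.map (unitHom FR Λ X Y h))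

/-- A module `M` over `FF_Λ R` is a prefragment if all the maps `M(1_{α,β})` are injective. -/
def IsPrefragment (M : Mod (FF FR Λ)) : Prop :=
  ∀ (α β : Λ) (h : (α : Γ) ≤ (β : Γ)), Function.Injective (M.obj.map (unitHomFF FR Λ α β h))

/-- The category of pregliders: the full subcategory of `Mod (oFF_Λ R)` of pregliders. -/
abbrev Preglid : Type (u + 1) :=
  ObjectProperty.FullSubcategory (fun M : Mod (OFF FR Λ) => IsPreglider FR Λ M)

instance : Preadditive (Preglid FR Λ) := Preadditive.fullSubcategory _

/-- The category of prefragments: the full subcategory of `Mod (FF_Λ R)` of prefragments. -/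
abbrev Prefrag : Type (u + 1) :=
  ObjectProperty.FullSubcategory (fun M : Mod (FF FR Λ) => IsPrefragment FR Λ M)

instance : Preadditive (Prefrag FR Λ) := Preadditive.fullSubcategory _

/-- The inclusion `Preglid FR Λ ⥤ Mod (oFF_Λ R)`. -/
def iotaF : Preglid FR Λ ⥤ Mod (OFF FR Λ) := ObjectProperty.ι _

/-- The inclusion `Prefrag FR Λ ⥤ Mod (FF_Λ R)`. -/
def etaF : Prefrag FR Λ ⥤ Mod (FF FR Λ) := ObjectProperty.ι _

/-- The component at `X` of a morphism of pregliders. -/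
def pgapp {M N : Preglid FR Λ} (f : M ⟶ N) (X : OFF FR Λ) :
    M.obj.obj.obj X ⟶ N.obj.obj.obj X :=
  mapp (show M.obj ⟶ N.obj from f.hom) X

/-- The component at `X` of a morphism of prefragments. -/
def pfapp {M N : Prefrag FR Λ} (f : M ⟶ N) (X : FF FR Λ) :
    M.obj.obj.obj X ⟶ N.obj.obj.obj X :=
  mapp (show M.obj ⟶ N.obj from f.hom) X

/-- The class `Σ` of morphisms of pregliders all of whose components at objects of `Λ`
are isomorphisms. -/
def SigmaClass : MorphismProperty (Preglid FR Λ) :=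
  fun _ _ f => ∀ α : Λ, IsIso (pgapp FR Λ f (.of α))

/-- The category of glider representations: the localization of `Preglid FR Λ` at `Σ`. -/
abbrev Glid : Type (u + 1) := (SigmaClass FR Λ).Localization

/-- The localization functor `Q : Preglid FR Λ ⥤ Glid FR Λ`. -/
def QF : Preglid FR Λ ⥤ Glid FR Λ := (SigmaClass FR Λ).Q

/-- The restriction functor `j^* : Mod (oFF_Λ R) ⥤ Mod (FF_Λ R)`. -/
def jStar : Mod (OFF FR Λ) ⥤ Mod (FF FR Λ) where
  obj M := ⟨jF FR Λ ⋙ M.obj, by haveI : M.obj.Additive := M.property; exact (inferInstance : (jF FR Λ ⋙ M.obj).Additive)⟩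
  map {M N} f := ObjectProperty.homMk (Functor.whiskerLeft (jF FR Λ) (show M.obj ⟶ N.obj from f.hom))
  map_id _ := rfl
  map_comp _ _ := rfl

theorem isPrefragment_jStar (M : Mod (OFF FR Λ)) (hM : IsPreglider FR Λ M) :
    IsPrefragment FR Λ ((jStar FR Λ).obj M) :=
  fun α β h => hM (.of α) (.of β) h

/-- The restriction functor `j^* : Preglid FR Λ ⥤ Prefrag FR Λ`. -/
def jRes : Preglid FR Λ ⥤ Prefrag FR Λ where
  obj M := ⟨(jStar FR Λ).obj M.obj, isPrefragment_jStar FR Λ M.obj M.property⟩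
  map f := ObjectProperty.homMk ((jStar FR Λ).map f.hom)
  map_id M := congrArg ObjectProperty.homMk ((jStar FR Λ).map_id M.obj)
  map_comp f g := congrArg ObjectProperty.homMk ((jStar FR Λ).map_comp f.hom g.hom)

theorem sigma_isInvertedBy : (SigmaClass FR Λ).IsInvertedBy (jRes FR Λ) := by
  intro M N f hf
  haveI : (AdditiveFunctor.forget (FF FR Λ) AddCommGrpCat.{u}).Faithful :=
    inferInstance
  haveI : ∀ X : FF FR Λ, IsIso
      (((ObjectProperty.ι (fun M : Mod (FF FR Λ) => IsPrefragment FR Λ M) ⋙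
        AdditiveFunctor.forget _ _).map ((jRes FR Λ).map f)).app X) := by
    rintro ⟨α⟩
    exact hf α
  haveI : IsIso ((ObjectProperty.ι (fun M : Mod (FF FR Λ) => IsPrefragment FR Λ M) ⋙
      AdditiveFunctor.forget _ _).map ((jRes FR Λ).map f)) :=
    NatIso.isIso_of_isIso_app _
  exact isIso_of_reflects_iso ((jRes FR Λ).map f)
    (ObjectProperty.ι (fun M : Mod (FF FR Λ) => IsPrefragment FR Λ M) ⋙
      AdditiveFunctor.forget _ _)

/-- The canonical fully faithful functor `φ : Glid FR Λ ⥤ Prefrag FR Λ`,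
the unique functor with `Q ⋙ φ = j^*`. -/
def phiF : Glid FR Λ ⥤ Prefrag FR Λ :=
  Localization.Construction.lift (jRes FR Λ) (sigma_isInvertedBy FR Λ)

theorem phiF_fac : QF FR Λ ⋙ phiF FR Λ = jRes FR Λ :=
  Localization.Construction.fac _ _


section Statements

variable {Γ : Type u} [Group Γ] [PartialOrder Γ]
  [CovariantClass Γ Γ (· * ·) (· ≤ ·)] [CovariantClass Γ Γ (Function.swap (· * ·)) (· ≤ ·)]
  {R : Type u} [Ring R]

/-
`j_L = κ ∘ j_! ∘ η` is left adjoint to the restriction `j^* : Preglid FR → Prefrag FR`. Its unit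
is surjective at every `λ ∈ Λ`: the image of the unit on `Λ`, extended by everything at `∞`, is a
sub-preglider through which the unit factors, so by the universal property its inclusion is a
split epimorphism. Together with a triangle identity this makes `j^*(ε_M)` bijective on `Λ`, i.e.
every counit component `ε_M` lies in `Σ`. Finally, an adjunction `F ⊣ Q ⋙ φ` whose counit is
inverted by a localization functor `Q` descends to an adjunction `φ ⋙ F ⊣ Q` with unit `Q(ε)⁻¹`;
an invertible unit makes the left adjoint fully faithful.
-/

section

variable {C D C' : Type*} [Category* C] [Category* D] [Category* C']

lemma _root_.CategoryTheory.Adjunction.isSplitEpi_of_unit_app_factors {F : C ⥤ D} {G : D ⥤ C}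
    (adj : F ⊣ G) {X : C} {Y : D} (i : Y ⟶ F.obj X) (g : X ⟶ G.obj Y)
    (h : g ≫ G.map i = adj.unit.app X) : IsSplitEpi i :=
  ⟨⟨(adj.homEquiv X Y).symm g, by
    rw [← adj.homEquiv_naturality_right_symm, h, Adjunction.homEquiv_counit]; simp⟩⟩

lemma _root_.CategoryTheory.Adjunction.counit_app_obj_eq_map_map_counit {F : D ⥤ C} {G : C ⥤ D}
    (adj : F ⊣ G) (M : C) [IsIso (G.map (adj.counit.app M))] :
    adj.counit.app (F.obj (G.obj M)) = F.map (G.map (adj.counit.app M)) := by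
  have hunit : adj.unit.app (G.obj M) = inv (G.map (adj.counit.app M)) :=
    IsIso.eq_inv_of_inv_hom_id (adj.right_triangle_components M)
  have := adj.left_triangle_components (G.obj M)
  rwa [hunit, Functor.map_inv, IsIso.inv_comp_eq, Category.comp_id] at this

variable {F : D ⥤ C} {Q : C ⥤ C'} {φ : C' ⥤ D} (adj : F ⊣ Q ⋙ φ)
  (hε : ∀ M, IsIso (Q.map (adj.counit.app M)))

def _root_.CategoryTheory.Adjunction.localizationCounitIso : (Q ⋙ φ ⋙ F) ⋙ Q ≅ Q :=
  NatIso.ofComponents (fun M => asIso (Q.map (adj.counit.app M)))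
    (fun f => by simpa using congrArg Q.map (adj.counit.naturality f))

variable (W : MorphismProperty C) [Q.IsLocalization W]

def _root_.CategoryTheory.Adjunction.leftAdjointOfLocalization : φ ⋙ F ⊣ Q :=
  Adjunction.mkOfUnitCounit
  { unit := (Localization.liftNatIso Q W Q ((Q ⋙ φ ⋙ F) ⋙ Q) (𝟭 C') ((φ ⋙ F) ⋙ Q)
      (adj.localizationCounitIso hε).symm).hom
    counit := adj.counit
    left_triangle := Localization.natTrans_ext Q W fun M => by
      have : IsIso ((Q ⋙ φ).map (adj.counit.app M)) := Functor.map_isIso φ _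
      have h := adj.counit_app_obj_eq_map_map_counit M
      simp only [Functor.comp_obj, Functor.comp_map] at h
      simp [Localization.liftNatIso, Localization.liftNatTrans_app,
        Adjunction.localizationCounitIso, h]
    right_triangle := by
      ext M
      simp [Localization.liftNatIso, Localization.liftNatTrans_app,
        Adjunction.localizationCounitIso] }

instance : IsIso (adj.leftAdjointOfLocalization hε W).unit := by
  dsimp only [Adjunction.leftAdjointOfLocalization, Adjunction.mkOfUnitCounit]
  infer_instance

end

section Subfunctor

variable {C : Type u} [Category.{u} C] [Preadditive C] (B : Mod C)
  (S : ∀ X, AddSubgroup (B.obj.obj X))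
  (hS : ∀ {X Y : C} (f : X ⟶ Y), S X ≤ (S Y).comap (B.obj.map f).hom)

def Mod.subfunctor : Mod C where
  obj :=
    { obj X := AddCommGrpCat.of (S X)
      map f := AddCommGrpCat.ofHom
        (((B.obj.map f).hom.comp (S _).subtype).codRestrict (S _) fun x => hS f x.2)
      map_id X := by ext x; exact congrArg (·.hom x.1) (B.obj.map_id X)
      map_comp f g := by ext x; exact congrArg (·.hom x.1) (B.obj.map_comp f g) }
  property := ⟨fun {_ _ f g} => by
    ext x; exact congrArg (·.hom x.1) (B.obj.map_add (f := f) (g := g))⟩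

def Mod.subfunctorι : Mod.subfunctor B S hS ⟶ B :=
  ObjectProperty.homMk { app X := AddCommGrpCat.ofHom (S X).subtype }

end Subfunctor

section Glider

variable {FR : RingFiltration Γ R} {Λ : Set Γ}

lemma isPreglider_subfunctor {B : Mod (OFF FR Λ)} (hB : IsPreglider FR Λ B)
    (S : ∀ X, AddSubgroup (B.obj.obj X))
    (hS : ∀ {X Y : OFF FR Λ} (f : X ⟶ Y), S X ≤ (S Y).comap (B.obj.map f).hom) :
    IsPreglider FR Λ (Mod.subfunctor B S hS) :=
  fun X Y h _ _ hxy => Subtype.ext (hB X Y h (congrArg Subtype.val hxy))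

def imageOnΛ {P : Mod (FF FR Λ)} {B : Mod (OFF FR Λ)} (h : P ⟶ (jStar FR Λ).obj B) :
    ∀ X : OFF FR Λ, AddSubgroup (B.obj.obj X)
  | .of β => (mapp h (FF.of β)).hom.range
  | .infty => ⊤

lemma imageOnΛ_le_comap {P : Mod (FF FR Λ)} {B : Mod (OFF FR Λ)} (h : P ⟶ (jStar FR Λ).obj B)
    {X Y : OFF FR Λ} (f : X ⟶ Y) : imageOnΛ h X ≤ (imageOnΛ h Y).comap (B.obj.map f).hom := by
  intro x hx
  match X, Y, f with
  | _, .infty, _ => trivial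
  | .of β, .of γ, f =>
    obtain ⟨a, rfl⟩ := hx
    exact ⟨P.obj.map (show FF.of β ⟶ FF.of γ from f) a,
      ConcreteCategory.congr_hom (h.hom.naturality (show FF.of β ⟶ FF.of γ from f)) a⟩
  | .infty, .of γ, f =>
    obtain rfl : f = 0 := Subtype.ext ((AddSubgroup.mem_bot).1 f.2)
    simp [Functor.map_zero]

variable {κ : Mod (OFF FR Λ) ⥤ Preglid FR Λ} {jbang : Mod (FF FR Λ) ⥤ Mod (OFF FR Λ)}
  (adjκ : κ ⊣ iotaF FR Λ) (adjj : jbang ⊣ jStar FR Λ)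

def jLAdjunction : etaF FR Λ ⋙ jbang ⋙ κ ⊣ jRes FR Λ :=
  (adjj.comp adjκ).restrictFullyFaithful (ObjectProperty.fullyFaithfulι _)
    (Functor.FullyFaithful.id _) (Functor.rightUnitor _).symm (Iso.refl _)

lemma jLAdjunction_unit_app_surjective (P : Prefrag FR Λ) (α : Λ) :
    Function.Surjective (pfapp FR Λ ((jLAdjunction adjκ adjj).unit.app P) (FF.of α)) := by
  set u := (jLAdjunction adjκ adjj).unit.app P
  set B := (etaF FR Λ ⋙ jbang ⋙ κ).obj P
  have hS : ∀ {X Y : OFF FR Λ} (f : X ⟶ Y),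
      imageOnΛ u.hom X ≤ (imageOnΛ u.hom Y).comap (B.obj.obj.map f).hom :=
    imageOnΛ_le_comap u.hom
  let B' : Preglid FR Λ :=
    ⟨Mod.subfunctor B.obj (imageOnΛ u.hom) hS, isPreglider_subfunctor B.property _ hS⟩
  let i : B' ⟶ B := ObjectProperty.homMk (Mod.subfunctorι B.obj _ hS)
  let g : P ⟶ (jRes FR Λ).obj B' := ObjectProperty.homMk (ObjectProperty.homMk
    { app := fun ⟨β⟩ => AddCommGrpCat.ofHom (pfapp FR Λ u (FF.of β)).hom.rangeRestrict
      naturality := fun ⟨β⟩ ⟨γ⟩ f => by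
        ext a
        exact Subtype.ext (ConcreteCategory.congr_hom (u.hom.hom.naturality f) a) })
  have hg : g ≫ (jRes FR Λ).map i = u := by
    ext ⟨β⟩ a
    rfl
  obtain ⟨⟨s, hs⟩⟩ :=
    ((jLAdjunction adjκ adjj).isSplitEpi_of_unit_app_factors i g hg).exists_splitEpi
  intro y
  exact (pgapp FR Λ s (.of α) y).2.imp fun a ha =>
    ha.trans (ConcreteCategory.congr_hom (congrArg (fun t => t.hom.hom.app (OFF.of α)) hs) y)

lemma jLAdjunction_counit_app_mem_sigmaClass (M : Preglid FR Λ) :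
    SigmaClass FR Λ ((jLAdjunction adjκ adjj).counit.app M) := by
  intro α
  have hinv : Function.LeftInverse (pgapp FR Λ ((jLAdjunction adjκ adjj).counit.app M) (.of α))
      (pfapp FR Λ ((jLAdjunction adjκ adjj).unit.app ((jRes FR Λ).obj M)) (FF.of α)) :=
    fun x => ConcreteCategory.congr_hom (congrArg (fun t => t.hom.hom.app (FF.of α))
      ((jLAdjunction adjκ adjj).right_triangle_components M)) x
  have hsurj := jLAdjunction_unit_app_surjective adjκ adjj ((jRes FR Λ).obj M) α
  exact (ConcreteCategory.isIso_iff_bijective _).2 (Function.bijective_iff_has_inverse.2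
    ⟨_, hinv.rightInverse_of_surjective hsurj, hinv⟩)

instance : (QF FR Λ).IsLocalization (SigmaClass FR Λ) :=
  inferInstanceAs ((SigmaClass FR Λ).Q.IsLocalization _)

end Glider

/-- The localization functor `Q : Preglid FR ⥤ Glid FR` admits a fully
faithful left adjoint `L := j_L ∘ φ` (where `j_L = κ ∘ j_! ∘ η` is the left adjoint of the
restricted functor `j^*`); in particular `Glid FR` is equivalent, via the fully faithful
functor `L`, to a coreflective full subcategory of `Preglid FR`. -/
theorem statement_7 (FR : RingFiltration Γ R) (Λ : Set Γ) :
    ∀ (κ : Mod (OFF FR Λ) ⥤ Preglid FR Λ), (κ ⊣ iotaF FR Λ) →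
      ∀ (jbang : Mod (FF FR Λ) ⥤ Mod (OFF FR Λ)), (jbang ⊣ jStar FR Λ) →
      Nonempty ((phiF FR Λ ⋙ (etaF FR Λ ⋙ jbang ⋙ κ)) ⊣ QF FR Λ) ∧
      (phiF FR Λ ⋙ (etaF FR Λ ⋙ jbang ⋙ κ)).Full ∧
      (phiF FR Λ ⋙ (etaF FR Λ ⋙ jbang ⋙ κ)).Faithful := by
  intro κ adjκ jbang adjj
  let adj := (jLAdjunction adjκ adjj).ofNatIsoRight (eqToIso (phiF_fac FR Λ).symm)
  have hε : ∀ M, IsIso ((QF FR Λ).map (adj.counit.app M)) := fun M => by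
    have := Localization.inverts (QF FR Λ) (SigmaClass FR Λ) _
      (jLAdjunction_counit_app_mem_sigmaClass adjκ adjj M)
    simp only [adj, Adjunction.ofNatIsoRight_counit, NatTrans.comp_app, Functor.whiskerRight_app,
      Functor.map_comp]
    infer_instance
  let L := adj.leftAdjointOfLocalization hε (SigmaClass FR Λ)
  exact ⟨⟨L⟩, L.fullyFaithfulLOfIsIsoUnit.full, L.fullyFaithfulLOfIsIsoUnit.faithful⟩

end Statements

end GliderPaper
end
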